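/- For every type context Π there exists a unique context Π^un such that Π = Π ∘ Π^un and Π = Π^un ∘ Π; moreover Π^un is exactly the subsequence of Π consisting of the bindings x:q P with q ≠ li. -/
import Mathlib


/-- Qualifiers `q ::= li | un`. -/
inductive Qual : Type
  | li
  | un
deriving DecidableEq

/-- Base pretypes (`int`, `bool`, `array`, ...), modelled as names. -/
abbrev BTy := String

/-- Types `T ::= q P` with pretypes `P ::= B | ⟨T,...,T⟩ | T → T`
(the outer qualifier is stored in each constructor). -/
inductive Ty : Type
  | base : Qual → BTy → Ty
  | tuple : Qual → List Ty → Ty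
  | arrow : Qual → Ty → Ty → Ty

/-- The qualifier of a type `q P`. -/
def Ty.q : Ty → Qual
  | .base q _ => q
  | .tuple q _ => q
  | .arrow q _ _ => q

/-- Pseudotypes `Υ ::= T | hi B`. -/
inductive PTy : Type
  | ty : Ty → PTy
  | hi : BTy → PTy

/-- A pseudotype is linear iff it is a type whose qualifier is `li`. -/
def PTy.isLin : PTy → Bool
  | .ty T => T.q = Qual.li
  | .hi _ => false

/-- Type contexts: lists of variable–pseudotype pairs (head = most recent binding). -/
abbrev Ctx := List (String × PTy)

/-- The context split relation `Γ₁ ∘ Γ₂ = Γ`: non-linear bindings are shared,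
linear bindings go to exactly one component. -/
inductive Split : Ctx → Ctx → Ctx → Prop
  | nil : Split [] [] []
  | both {Γ₁ Γ₂ Γ : Ctx} {x : String} {υ : PTy} :
      υ.isLin = false → Split Γ₁ Γ₂ Γ →
      Split ((x, υ) :: Γ₁) ((x, υ) :: Γ₂) ((x, υ) :: Γ)
  | left {Γ₁ Γ₂ Γ : Ctx} {x : String} {υ : PTy} :
      υ.isLin = true → Split Γ₁ Γ₂ Γ →
      Split ((x, υ) :: Γ₁) Γ₂ ((x, υ) :: Γ)
  | right {Γ₁ Γ₂ Γ : Ctx} {x : String} {υ : PTy} :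
      υ.isLin = true → Split Γ₁ Γ₂ Γ →
      Split Γ₁ ((x, υ) :: Γ₂) ((x, υ) :: Γ)


theorem Split.length_le {a b c : Ctx} (h : Split a b c) : a.length ≤ c.length := by
  induction h <;> simp_all <;> omega

theorem split_self_eq {a b c : Ctx} (h : Split a b c) (hac : a = c) :
    b = c.filter (fun p => !p.2.isLin) := by
  induction h with
  | nil => rfl
  | both hl _ ih =>
    simp only [List.cons.injEq] at hac
    simp [List.filter, hl, ih hac.2]
  | left hl _ ih =>
    simp only [List.cons.injEq] at hac
    simp [List.filter, hl, ih hac.2]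
  | right hl h _ =>
    subst hac
    have := h.length_le
    simp at this
theorem split_filter_right (Γ : Ctx) : Split Γ (Γ.filter (fun p => !p.2.isLin)) Γ := by
  induction Γ with
  | nil => exact .nil
  | cons p Γ ih =>
    obtain ⟨x, υ⟩ := p
    by_cases h : υ.isLin = true
    · simpa [List.filter, h] using Split.left h ih
    · simp at h; simpa [List.filter, h] using Split.both h ih

theorem split_filter_left (Γ : Ctx) : Split (Γ.filter (fun p => !p.2.isLin)) Γ Γ := by
  induction Γ with
  | nil => exact .nil
  | cons p Γ ih =>
    obtain ⟨x, υ⟩ := p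
    by_cases h : υ.isLin = true
    · simpa [List.filter, h] using Split.right h ih
    · simp at h; simpa [List.filter, h] using Split.both h ih

/-- For every context `Γ` there exists a unique context `Γ^un` such that
`Γ = Γ ∘ Γ^un` and `Γ = Γ^un ∘ Γ`; moreover `Γ^un` is exactly the subsequence
of `Γ` consisting of the non-linear bindings. -/
theorem split_unrestricted_part (Γ : Ctx) :
    ∀ Δ : Ctx, (Split Γ Δ Γ ∧ Split Δ Γ Γ) ↔
      Δ = Γ.filter (fun p => !p.2.isLin) := by
  intro Δ
  constructor
  · rintro ⟨h, -⟩; exact split_self_eq h rfl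
  · rintro rfl; exact ⟨split_filter_right Γ, split_filter_left Γ⟩
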